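/- Let n be a natural number, T > 0, and let F : (Fin n → ℝ) × (Fin n → ℝ) → (Fin n → ℝ) be continuously differentiable (C¹). Let x : ℝ → (Fin n → ℝ) be continuously differentiable on [0,T] with F(x(t), x'(t)) = 0 for all t ∈ [0,T], and suppose that for every t ∈ [0,T] the partial Jacobian of F with respect to its second argument at (x(t), x'(t)), i.e. the linear map v ↦ D F(x(t),x'(t))(0, v), is a linear isomorphism of ℝⁿ. Then x is of class C² on [0,T]. -/

import Mathlib

/-!
Near each point of the trace, the invertibility of `∂F/∂x'` lets the implicit function theorem
solve `F (x, x') = 0` for `x'`: there is a `C¹` map `ψ` with `x' = ψ ∘ x` near that point.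
Since `x` is `C¹`, so is `x' = ψ ∘ x`, i.e. `x` is `C²`.
-/

open Topology

theorem ContinuousLinearMap.isInvertible_of_bijective {𝕜 : Type*} [NontriviallyNormedField 𝕜]
    {E F : Type*} [NormedAddCommGroup E] [NormedSpace 𝕜 E] [CompleteSpace E]
    [NormedAddCommGroup F] [NormedSpace 𝕜 F] [CompleteSpace F] {f : E →L[𝕜] F}
    (hf : Function.Bijective f) : f.IsInvertible :=
  ⟨.ofBijective f (LinearMap.ker_eq_bot.2 hf.1) (LinearMap.range_eq_top.2 hf.2),
    ContinuousLinearEquiv.coe_ofBijective _ _ _⟩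

section Implicit

variable {𝕜 : Type*} [RCLike 𝕜]
  {E₁ : Type*} [NormedAddCommGroup E₁] [NormedSpace 𝕜 E₁] [CompleteSpace E₁]
  {E₂ : Type*} [NormedAddCommGroup E₂] [NormedSpace 𝕜 E₂] [CompleteSpace E₂]
  {F : Type*} [NormedAddCommGroup F] [NormedSpace 𝕜 F] [CompleteSpace F]
  {G : Type*} [NormedAddCommGroup G] [NormedSpace 𝕜 G]

theorem ContDiffAt.contDiffWithinAt_of_eventually_apply_eq {n : WithTop ℕ∞} {f : E₁ × E₂ → F}
    {x : G → E₁} {y : G → E₂} {s : Set G} {t₀ : G}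
    (hf : ContDiffAt 𝕜 n f (x t₀, y t₀)) (hn : n ≠ 0)
    (hf₂ : (fderiv 𝕜 f (x t₀, y t₀) ∘L .inr 𝕜 E₁ E₂).IsInvertible)
    (hx : ContDiffWithinAt 𝕜 n x s t₀) (hy : ContinuousWithinAt y s t₀)
    (hxy : ∀ᶠ t in 𝓝[s] t₀, f (x t, y t) = f (x t₀, y t₀)) :
    ContDiffWithinAt 𝕜 n y s t₀ := by
  have hψ := hf.contDiffAt_implicitFunction hn hf₂
  have hy_eq : ∀ᶠ t in 𝓝[s] t₀, y t = hf.implicitFunction hn hf₂ (x t) := by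
    have hcurve : ContinuousWithinAt (fun t ↦ (x t, y t)) s t₀ :=
      hx.continuousWithinAt.prodMk hy
    filter_upwards [hcurve (hf.eventually_apply_eq_iff_implicitFunction hn hf₂), hxy]
      with t hiff ht
    exact (hiff.1 ht).symm
  exact (hψ.comp_contDiffWithinAt t₀ hx).congr_of_eventuallyEq hy_eq
    (hf.implicitFunction_apply_self hn hf₂).symm

theorem ContDiffOn.succ_of_apply_derivWithin_eq_zero {n : ℕ∞} {f : E₁ × E₁ → F} {x : 𝕜 → E₁}
    {s : Set 𝕜} (hs : UniqueDiffOn 𝕜 s) (hn : n ≠ 0) (hf : ContDiff 𝕜 n f)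
    (hx : ContDiffOn 𝕜 n x s) (hfx : ∀ t ∈ s, f (x t, derivWithin x s t) = 0)
    (hf₂ : ∀ t ∈ s, (fderiv 𝕜 f (x t, derivWithin x s t) ∘L .inr 𝕜 E₁ E₁).IsInvertible) :
    ContDiffOn 𝕜 (n + 1) x s := by
  have hn' : (n : WithTop ℕ∞) ≠ 0 := by exact_mod_cast hn
  refine (contDiffOn_succ_iff_derivWithin hs).2
    ⟨hx.differentiableOn hn', by simp, fun t ht ↦ ?_⟩
  have hx' : ContinuousOn (derivWithin x s) s :=
    hx.continuousOn_derivWithin hs (by exact_mod_cast Order.one_le_iff_ne_zero.2 hn)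
  refine hf.contDiffAt.contDiffWithinAt_of_eventually_apply_eq hn' (hf₂ t ht) (hx t ht)
    (hx' t ht) ?_
  filter_upwards [self_mem_nhdsWithin] with t' ht'
  rw [hfx t' ht', hfx t ht]

end Implicit

/-- Regularity along a DAE trace (key step of the algebraic ghost axiom): if
`F` is `C¹`, `x` is a `C¹` trace on `[0,T]` with `F (x t, x' t) = 0`, and the
partial Jacobian of `F` with respect to its second argument is a linear
isomorphism at every point `(x t, x' t)`, then `x` is `C²` on `[0,T]`. -/
theorem trace_C2_regularity
    (n : ℕ) (T : ℝ) (hT : 0 < T)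
    (F : (Fin n → ℝ) × (Fin n → ℝ) → (Fin n → ℝ))
    (hF : ContDiff ℝ 1 F)
    (x : ℝ → Fin n → ℝ)
    (hx : ContDiffOn ℝ 1 x (Set.Icc 0 T))
    (hFx : ∀ t ∈ Set.Icc 0 T, F (x t, derivWithin x (Set.Icc 0 T) t) = 0)
    (hJac : ∀ t ∈ Set.Icc 0 T,
      Function.Bijective (fun v : Fin n → ℝ =>
        fderiv ℝ F (x t, derivWithin x (Set.Icc 0 T) t) (0, v))) :
    ContDiffOn ℝ 2 x (Set.Icc 0 T) :=
  (hx.succ_of_apply_derivWithin_eq_zero (n := 1) (uniqueDiffOn_Icc hT) one_ne_zero hF hFx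
    fun t ht ↦ ContinuousLinearMap.isInvertible_of_bijective (hJac t ht) :)
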